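/- arXiv:2005.09341 — 4 statements merged into one kernel-verified Lean document; each statement's English description precedes it below -/
import Mathlib

section
/- Let A be a symmetric real n×n matrix (the adjacency matrix of a (q+1)-regular graph, q ≥ 1), define A_m by the recurrence A_0 = I, A_1 = A, A_2 = A² − (q+1)I, A_m = A_{m−1}A − qA_{m−2} for m ≥ 3, and set M_m = A_m − (q−1)·∑_{k=1}^{⌊(m−1)/2⌋} A_{m−2k}. Then for every m ≥ 1, M_m = 2q^{m/2}·T_m(A/(2√q)) + e_m(q−1)·I, where T_m is the Chebyshev polynomial of the first kind and e_m = 1 if m is even, e_m = 0 if m is odd. -/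
open Polynomial Polynomial.Chebyshev Matrix Finset

/-- With `A_m` (`= B m`) satisfying the non-backtracking recurrence for the adjacency
matrix `A` of a connected `(q+1)`-regular graph, and
`M m = A_m - (q-1) ∑_{k=1}^{⌊(m-1)/2⌋} A_{m-2k}`, one has for every `m ≥ 1` that
`M m = 2 q^{m/2} T_m(A / (2√q)) + e_m (q-1) I`, where `T_m` is the Chebyshev polynomial
of the first kind and `e_m` is `1` for even `m` and `0` for odd `m`. -/
theorem M_eq_chebyshevT
    {n : ℕ} (G : SimpleGraph (Fin n)) [DecidableRel G.Adj]
    (q : ℕ) (hq : 1 ≤ q) (hGconn : G.Connected) (hreg : G.IsRegularOfDegree (q + 1))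
    (A : Matrix (Fin n) (Fin n) ℝ) (hA : A = G.adjMatrix ℝ)
    (B : ℕ → Matrix (Fin n) (Fin n) ℝ)
    (hB0 : B 0 = 1) (hB1 : B 1 = A) (hB2 : B 2 = A ^ 2 - (q + 1 : ℝ) • 1)
    (hBrec : ∀ m, 3 ≤ m → B m = B (m - 1) * A - (q : ℝ) • B (m - 2))
    (M : ℕ → Matrix (Fin n) (Fin n) ℝ)
    (hM : ∀ m, M m = B m - (q - 1 : ℝ) • ∑ k ∈ Finset.Icc 1 ((m - 1) / 2), B (m - 2 * k)) :
    ∀ m : ℕ, 1 ≤ m → M m = (2 * (Real.sqrt q) ^ m) •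
        Polynomial.aeval ((2 * Real.sqrt q)⁻¹ • A) (Chebyshev.T ℝ (m : ℤ))
      + ((if Even m then (1 : ℝ) else 0) * (q - 1)) • (1 : Matrix (Fin n) (Fin n) ℝ) := by
  have hq0 : (0:ℝ) < q := by exact_mod_cast Nat.lt_of_lt_of_le Nat.zero_lt_one hq
  set s : ℝ := Real.sqrt q with hsdef
  have hs0 : 0 < s := Real.sqrt_pos.mpr hq0
  have hsne : s ≠ 0 := ne_of_gt hs0
  have hs2 : s ^ 2 = q := Real.sq_sqrt hq0.le
  set x : Matrix (Fin n) (Fin n) ℝ := (2 * s)⁻¹ • A with hxdef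
  set S : ℕ → Matrix (Fin n) (Fin n) ℝ :=
    fun m => ∑ k ∈ Finset.Icc 1 ((m - 1) / 2), B (m - 2 * k) with hSdef
  set t : ℕ → Matrix (Fin n) (Fin n) ℝ :=
    fun m => Polynomial.aeval x (Chebyshev.T ℝ (m : ℤ)) with htdef
  set P : ℕ → Matrix (Fin n) (Fin n) ℝ := fun m => (2 * s ^ m) • t m with hPdef
  have hM' : ∀ m, M m = B m - ((q:ℝ) - 1) • S m := by
    intro m; rw [hSdef]; exact hM m
  -- the sum recurrence
  have hSrange : ∀ m K, (∑ k ∈ Finset.Icc 1 K, B (m - 2*k))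
      = ∑ j ∈ Finset.range K, B (m - 2*(1+j)) := by
    intro m K
    rw [← Finset.Ico_add_one_right_eq_Icc, Finset.sum_Ico_eq_sum_range]
    simp
  have hS : ∀ m, 1 ≤ m → S (m+2) = B m + S m := by
    intro m hm
    have hdiv : (m + 2 - 1)/2 = (m-1)/2 + 1 := by omega
    simp only [hSdef]
    rw [hdiv, hSrange, hSrange, Finset.sum_range_succ']
    have h0 : m + 2 - 2*(1+0) = m := by omega
    rw [h0]
    have hsum : ∀ j ∈ Finset.range ((m-1)/2),
        B (m+2 - 2*(1+(j+1))) = B (m - 2*(1+j)) := by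
      intro j _; exact congrArg B (by omega)
    rw [Finset.sum_congr rfl hsum]
    exact add_comm _ _
  -- B recurrence rearranged
  have hBA : ∀ m, B (m+2) * A = B (m+3) + (q:ℝ) • B (m+1) := by
    intro m
    have h := hBrec (m+3) (by omega)
    rw [show m+3-1 = m+2 from by omega, show m+3-2 = m+1 from by omega] at h
    rw [h]; abel
  -- the S * A identity
  have hSA : ∀ m, S (m+2) * A = B (m+1) + ((q:ℝ)+1) • S (m+1)
      + (if Even (m+1) then ((q:ℝ)+1) • (1 : Matrix (Fin n) (Fin n) ℝ) else -A) := by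
    intro m
    induction m using Nat.twoStepInduction with
    | zero =>
        have h2 : S 2 = 0 := by simp [hSdef]
        have h1 : S 1 = 0 := by simp [hSdef]
        rw [show (0:ℕ)+2 = 2 from rfl, show (0:ℕ)+1 = 1 from rfl, h2, h1, hB1,
          if_neg (by decide : ¬ Even 1)]
        simp
    | one =>
        have h3 : S 3 = A := by simp [hSdef, hB1]
        have h2 : S 2 = 0 := by simp [hSdef]
        rw [show (1:ℕ)+2 = 3 from rfl, show (1:ℕ)+1 = 2 from rfl, h3, h2, hB2,
          if_pos (by decide : Even 2), ← pow_two]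
        module
    | more m ih _ =>
        have e1 : S (m+4) = B (m+2) + S (m+2) := by
          have := hS (m+2) (by omega)
          rw [show m+2+2 = m+4 from by omega] at this; exact this
        have e2 : S (m+3) = B (m+1) + S (m+1) := by
          have := hS (m+1) (by omega)
          rw [show m+1+2 = m+3 from by omega] at this; exact this
        have epar : Even (m+2+1) ↔ Even (m+1) := by
          rw [Nat.even_iff, Nat.even_iff]; omega
        rw [show m+2+2 = m+4 from by omega, show m+2+1 = m+3 from by omega] at *
        rw [e1, add_mul, hBA, ih, e2]
        have epar' : (if Even (m+3) then ((q:ℝ)+1) • (1 : Matrix (Fin n) (Fin n) ℝ) else -A)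
            = (if Even (m+1) then ((q:ℝ)+1) • (1 : Matrix (Fin n) (Fin n) ℝ) else -A) :=
          if_congr epar rfl rfl
        rw [epar']
        module
  -- the M recurrence
  have hMrec : ∀ m, M (m+3) = M (m+2) * A - (q:ℝ) • M (m+1)
      + (if Even (m+1) then ((q:ℝ)^2-1) • (1 : Matrix (Fin n) (Fin n) ℝ)
         else -(((q:ℝ)-1) • A)) := by
    intro m
    have hb := hBrec (m+3) (by omega)
    rw [show m+3-1 = m+2 from by omega, show m+3-2 = m+1 from by omega] at hb
    have e2 : S (m+3) = B (m+1) + S (m+1) := by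
      have := hS (m+1) (by omega)
      rw [show m+1+2 = m+3 from by omega] at this; exact this
    have hsa := hSA m
    rw [hM' (m+3), hM' (m+2), hM' (m+1), hb, e2, sub_mul, smul_mul_assoc, hsa]
    by_cases hpar : Even (m+1)
    · rw [if_pos hpar, if_pos hpar]; module
    · rw [if_neg hpar, if_neg hpar]; module
  -- Chebyshev recurrence at the matrix level
  have ht : ∀ m : ℕ, t (m+2) = (2:ℝ) • (t (m+1) * x) - t m := by
    intro m
    have c2 : ((m+2:ℕ):ℤ) = (m:ℤ)+2 := by push_cast; ring
    have c1 : ((m+1:ℕ):ℤ) = (m:ℤ)+1 := by push_cast; ring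
    have hTpoly : T ℝ ((m:ℤ)+2) = (2:ℝ) • (T ℝ ((m:ℤ)+1) * X) - T ℝ (m:ℤ) := by
      rw [T_add_two, Polynomial.smul_eq_C_mul]
      simp only [map_ofNat]
      ring
    simp only [htdef]
    rw [c2, c1, hTpoly, _root_.map_sub, _root_.map_smul, _root_.map_mul, Polynomial.aeval_X]
  have hPrec : ∀ m : ℕ, P (m+2) = P (m+1) * A - (q:ℝ) • P m := by
    intro m
    simp only [hPdef]
    rw [ht m, hxdef, mul_smul_comm, smul_mul_assoc]
    match_scalars
    · field_simp
      ring
    · linear_combination (-2*(s:ℝ)^m) * hs2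
  -- main induction
  have key : ∀ m, M (m+1) = P (m+1)
      + ((if Even (m+1) then (1:ℝ) else 0) * ((q:ℝ)-1)) • (1 : Matrix (Fin n) (Fin n) ℝ) := by
    intro m
    induction m using Nat.twoStepInduction with
    | zero =>
        have hS1 : S 1 = 0 := by simp [hSdef]
        have hM1 : M 1 = A := by rw [hM' 1, hS1, smul_zero, sub_zero, hB1]
        have ht1 : t 1 = x := by
          simp only [htdef, Nat.cast_one]
          rw [Polynomial.Chebyshev.T_one, Polynomial.aeval_X]
        rw [show (0:ℕ)+1 = 1 from rfl, hM1]
        simp only [hPdef, ht1, hxdef, if_neg (by decide : ¬ Even 1), zero_mul, zero_smul,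
          add_zero, smul_smul, pow_one]
        rw [mul_inv_cancel₀ (by positivity : (2*s) ≠ 0), one_smul]
    | one =>
        have hS2 : S 2 = 0 := by simp [hSdef]
        have hM2 : M 2 = A ^ 2 - ((q:ℝ) + 1) • 1 := by
          rw [hM' 2, hS2, smul_zero, sub_zero, hB2]
        have hT2 : T ℝ ((2:ℕ):ℤ) = (2:ℝ) • (X^2 : ℝ[X]) - 1 := by
          rw [show ((2:ℕ):ℤ) = 2 from by norm_num, Polynomial.Chebyshev.T_two,
            Polynomial.smul_eq_C_mul]
          simp only [map_ofNat]
        have ht2 : t 2 = (2:ℝ) • (x^2) - 1 := by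
          simp only [htdef]
          rw [hT2, _root_.map_sub, _root_.map_smul, _root_.map_pow, Polynomial.aeval_X, _root_.map_one]
        rw [show (1:ℕ)+1 = 2 from rfl, hM2]
        simp only [hPdef, ht2, hxdef, if_pos (by decide : Even 2), one_mul, _root_.smul_pow]
        match_scalars
        · field_simp
        · linear_combination (2:ℝ) * hs2
    | more m ih1 ih2 =>
        rw [show m+2+1 = m+3 from rfl] 
        rw [show m+1+1 = m+2 from rfl] at ih2
        have hp := hPrec (m+1)
        rw [show m+1+2 = m+3 from by omega, show m+1+1 = m+2 from rfl] at hp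
        rw [hMrec m, ih2, ih1, hp, add_mul]
        simp only [smul_mul_assoc, one_mul]
        have h3 : Even (m+3) ↔ Even (m+1) := by rw [Nat.even_iff, Nat.even_iff]; omega
        have h2 : Even (m+2) ↔ ¬ Even (m+1) := by rw [Nat.even_iff, Nat.even_iff]; omega
        by_cases hpar : Even (m+1)
        · rw [if_pos hpar, if_pos (h3.mpr hpar), if_neg (by simpa [h2] using hpar),
            if_pos hpar]
          module
        · rw [if_neg hpar, if_neg fun h => hpar (h3.mp h), if_pos (h2.mpr hpar),
            if_neg hpar]
          module
  intro m hm
  obtain ⟨k, rfl⟩ : ∃ k, m = k+1 := ⟨m-1, by omega⟩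
  have h := key k
  simp only [hPdef, htdef] at h
  exact h
end

section
/- Let G be a connected (q+1)-regular graph on n vertices with adjacency matrix A, and let N_m be the number of reduced (non-backtracking, tail-free) closed paths of length m in G. Then N_m = 2q^{m/2}·∑_{λ ∈ Spec(A)} T_m(λ/(2√q)) + n·e_m·(q−1), where the sum is over eigenvalues with multiplicity, T_m is the Chebyshev polynomial of the first kind, and e_m = 1 if m is even, 0 otherwise. -/
open Polynomial Polynomial.Chebyshev Matrix Finset

/-!
With `E_m` the Dickson polynomials of the second kind with parameter `q`, the non-backtracking
matrices are `A_m = p_m(A)` with `p_1 = E_1` and `p_m = E_m - E_{m-2}` for `m ≥ 2`. So the sum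
`∑ₖ p_{m-2k}` telescopes to `E_{m-2} - e_m`, and `M_m = D_m(A) + e_m (q-1)` where
`D_m = E_m - q E_{m-2}` is the Dickson polynomial of the first kind. Finally
`D_m(x) = 2 q^{m/2} T_m(x / 2√q)`, and the trace of a polynomial in a Hermitian matrix is the sum
of its values at the eigenvalues.
-/

theorem Polynomial.dickson_one_add_two_eq_dickson_two_sub {R : Type*} [CommRing R] (a : R) :
    ∀ n : ℕ, dickson 1 a (n + 2) = dickson 2 a (n + 2) - Polynomial.C a * dickson 2 a n
  | 0 => by simp only [zero_add, dickson_add_two, dickson_one, dickson_zero]; ring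
  | 1 => by simp only [zero_add, dickson_add_two, dickson_one, dickson_zero]; ring
  | n + 2 => by
    rw [dickson_add_two, dickson_one_add_two_eq_dickson_two_sub a n,
      dickson_one_add_two_eq_dickson_two_sub a (n + 1), dickson_add_two 2 a (n + 2),
      dickson_add_two 2 a (n + 1), dickson_add_two 2 a n]
    ring

theorem Polynomial.eval_dickson_one_sq {K : Type*} [Field K] [NeZero (2 : K)] {s : K}
    (hs : s ≠ 0) (x : K) :
    ∀ n : ℕ, (dickson 1 (s ^ 2) n).eval x = 2 * s ^ n * (T K n).eval (x / (2 * s))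
  | 0 => by simp only [dickson_zero, Nat.cast_zero, T_zero]; norm_num
  | 1 => by simp only [dickson_one, Nat.cast_one, T_one, eval_X]; field_simp
  | n + 2 => by
    have hT := T_add_two K n
    push_cast at hT ⊢
    rw [dickson_add_two, hT]
    simp only [eval_sub, eval_mul, eval_X, eval_C, eval_ofNat, eval_dickson_one_sq hs x n,
      eval_dickson_one_sq hs x (n + 1)]
    push_cast
    field_simp
    ring

theorem Finset.sum_Icc_sub_two_mul_add_two {M : Type*} [AddCommMonoid M] (f : ℕ → M) {m : ℕ}
    (hm : 1 ≤ m) :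
    ∑ k ∈ Icc 1 ((m + 2 - 1) / 2), f (m + 2 - 2 * k) =
      f m + ∑ k ∈ Icc 1 ((m - 1) / 2), f (m - 2 * k) := by
  obtain ⟨K, hK⟩ : ∃ K, (m - 1) / 2 = K := ⟨_, rfl⟩
  rw [show (m + 2 - 1) / 2 = K + 1 by omega, hK, ← insert_Icc_add_one_left_eq_Icc (by omega),
    sum_insert (by simp), ← map_add_right_Icc, sum_map]
  congr 1
  refine sum_congr rfl fun k _ => ?_
  rw [addRightEmbedding_apply]
  congr 1
  omega

section NonbacktrackingPoly

variable {R : Type*} [CommRing R]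

/-- The polynomial `p_m` with `A_m = p_m(A)`, where `A_m` counts the non-backtracking walks of
length `m` in a `(q+1)`-regular graph with adjacency matrix `A`. -/
noncomputable def nonbacktrackingPoly (q : R) : ℕ → R[X]
  | 0 => 1
  | 1 => X
  | 2 => X ^ 2 - Polynomial.C (q + 1)
  | m + 3 => nonbacktrackingPoly q (m + 2) * X - Polynomial.C q * nonbacktrackingPoly q (m + 1)

theorem eq_aeval_nonbacktrackingPoly {S : Type*} [Ring S] [Algebra R S] (q : R) (a : S)
    {b : ℕ → S} (h0 : b 0 = 1) (h1 : b 1 = a) (h2 : b 2 = a ^ 2 - (q + 1) • 1)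
    (hrec : ∀ m, 3 ≤ m → b m = b (m - 1) * a - q • b (m - 2)) :
    ∀ m, b m = aeval a (nonbacktrackingPoly q m)
  | 0 => by simp [h0, nonbacktrackingPoly]
  | 1 => by simp [h1, nonbacktrackingPoly]
  | 2 => by simp [h2, nonbacktrackingPoly, Algebra.algebraMap_eq_smul_one, add_smul]
  | m + 3 => by
    rw [hrec (m + 3) (by omega), show m + 3 - 1 = m + 2 from rfl, show m + 3 - 2 = m + 1 from rfl,
      eq_aeval_nonbacktrackingPoly q a h0 h1 h2 hrec (m + 2),
      eq_aeval_nonbacktrackingPoly q a h0 h1 h2 hrec (m + 1), nonbacktrackingPoly]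
    simp [Algebra.smul_def]

theorem nonbacktrackingPoly_add_two_eq_dickson_two_sub (q : R) :
    ∀ m : ℕ, nonbacktrackingPoly q (m + 2) = dickson 2 q (m + 2) - dickson 2 q m
  | 0 => by
    simp only [nonbacktrackingPoly, zero_add, dickson_add_two, dickson_one, dickson_zero, map_add,
      map_one]
    ring
  | 1 => by
    rw [nonbacktrackingPoly, nonbacktrackingPoly_add_two_eq_dickson_two_sub q 0]
    simp only [nonbacktrackingPoly, zero_add, dickson_add_two, dickson_one, dickson_zero]
    ring
  | m + 2 => by
    rw [nonbacktrackingPoly, nonbacktrackingPoly_add_two_eq_dickson_two_sub q m,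
      nonbacktrackingPoly_add_two_eq_dickson_two_sub q (m + 1), dickson_add_two 2 q (m + 2),
      dickson_add_two 2 q m]
    ring

theorem sum_nonbacktrackingPoly_add_two_eq_dickson_two (q : R) : ∀ m : ℕ,
    ∑ k ∈ Icc 1 ((m + 2 - 1) / 2), nonbacktrackingPoly q (m + 2 - 2 * k) =
      dickson 2 q m - if Even m then 1 else 0
  | 0 => by norm_num
  | 1 => by simp [nonbacktrackingPoly]
  | m + 2 => by
    rw [sum_Icc_sub_two_mul_add_two _ (by omega),
      sum_nonbacktrackingPoly_add_two_eq_dickson_two q m,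
      nonbacktrackingPoly_add_two_eq_dickson_two_sub]
    simp only [Nat.even_add, even_two, iff_true]
    ring

theorem nonbacktrackingPoly_sub_sum_eq_dickson_one (q : R) {m : ℕ} (hm : 1 ≤ m) :
    nonbacktrackingPoly q m - Polynomial.C (q - 1) *
        ∑ k ∈ Icc 1 ((m - 1) / 2), nonbacktrackingPoly q (m - 2 * k) =
      dickson 1 q m + Polynomial.C ((if Even m then 1 else 0) * (q - 1)) := by
  obtain rfl | ⟨m, rfl⟩ : m = 1 ∨ ∃ m', m = m' + 2 := by
    rcases m with _ | _ | m <;> simp_all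
  · simp [nonbacktrackingPoly]
  · rw [sum_nonbacktrackingPoly_add_two_eq_dickson_two,
      nonbacktrackingPoly_add_two_eq_dickson_two_sub, dickson_one_add_two_eq_dickson_two_sub]
    simp only [Nat.even_add, even_two, iff_true]
    split_ifs <;> simp only [map_sub, map_one, map_zero, one_mul, zero_mul] <;> ring

end NonbacktrackingPoly

theorem Matrix.IsHermitian.trace_aeval_eq_sum_eval_eigenvalues {𝕜 n : Type*} [RCLike 𝕜]
    [Fintype n] [DecidableEq n] {A : Matrix n n 𝕜} (hA : A.IsHermitian) (p : ℝ[X]) :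
    (aeval A p).trace = ∑ i, ((p.eval (hA.eigenvalues i) : ℝ) : 𝕜) := by
  rw [← cfc_polynomial p A hA.isSelfAdjoint, hA.cfc_eq, IsHermitian.cfc,
    Unitary.conjStarAlgAut_apply, trace_mul_cycle, Unitary.coe_star_mul_self, one_mul,
    trace_diagonal]
  rfl

theorem card_reducedCycles_eq_chebyshevT_sum_general
    {n : ℕ} (G : SimpleGraph (Fin n)) [DecidableRel G.Adj]
    (q : ℕ) (hq : 1 ≤ q)
    (hHerm : (G.adjMatrix ℝ).IsHermitian)
    (B : ℕ → Matrix (Fin n) (Fin n) ℝ)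
    (hB0 : B 0 = 1) (hB1 : B 1 = G.adjMatrix ℝ)
    (hB2 : B 2 = (G.adjMatrix ℝ) ^ 2 - (q + 1 : ℝ) • 1)
    (hBrec : ∀ m, 3 ≤ m → B m = B (m - 1) * G.adjMatrix ℝ - (q : ℝ) • B (m - 2))
    (N : ℕ → ℕ)
    (hN : ∀ m, (N m : ℝ) =
      (B m - (q - 1 : ℝ) • ∑ k ∈ Finset.Icc 1 ((m - 1) / 2), B (m - 2 * k)).trace) :
    ∀ m : ℕ, 1 ≤ m → (N m : ℝ) =
      2 * (Real.sqrt q) ^ m *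
        ∑ i : Fin n, (Chebyshev.T ℝ (m : ℤ)).eval (hHerm.eigenvalues i / (2 * Real.sqrt q))
      + n * (if Even m then (1 : ℝ) else 0) * (q - 1) := by
  intro m hm
  have hB := eq_aeval_nonbacktrackingPoly (q : ℝ) (G.adjMatrix ℝ) hB0 hB1 hB2 hBrec
  have hM : B m - (q - 1 : ℝ) • ∑ k ∈ Icc 1 ((m - 1) / 2), B (m - 2 * k) =
      aeval (G.adjMatrix ℝ)
        (dickson 1 (q : ℝ) m + Polynomial.C ((if Even m then 1 else 0) * ((q : ℝ) - 1))) := by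
    rw [← nonbacktrackingPoly_sub_sum_eq_dickson_one _ hm, map_sub, map_mul, map_sum,
      Polynomial.aeval_C, ← Algebra.smul_def]
    simp only [hB]
  have hD (x : ℝ) : (dickson 1 (q : ℝ) m).eval x =
      2 * Real.sqrt q ^ m * (T ℝ m).eval (x / (2 * Real.sqrt q)) := by
    rw [← eval_dickson_one_sq (by positivity), Real.sq_sqrt (Nat.cast_nonneg q)]
  rw [hN m, hM, hHerm.trace_aeval_eq_sum_eval_eigenvalues]
  simp only [eval_add, eval_C, hD, RCLike.ofReal_real_eq_id, id, sum_add_distrib, sum_const,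
    card_univ, Fintype.card_fin, nsmul_eq_mul, mul_sum]
  ring

/-- For a connected `(q+1)`-regular graph `G` on `n` vertices, the number `N m` of
reduced (non-backtracking, tail-free) closed paths of length `m` — which equals the
trace of `M m = A_m - (q-1) ∑_{k=1}^{⌊(m-1)/2⌋} A_{m-2k}` — satisfies
`N m = 2 q^{m/2} ∑_{λ ∈ Spec(A)} T_m(λ/(2√q)) + n e_m (q-1)`, the sum being over the
eigenvalues of the adjacency matrix counted with multiplicity. -/
theorem card_reducedCycles_eq_chebyshevT_sum
    {n : ℕ} (G : SimpleGraph (Fin n)) [DecidableRel G.Adj]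
    (q : ℕ) (hq : 1 ≤ q) (hGconn : G.Connected) (hreg : G.IsRegularOfDegree (q + 1))
    (hHerm : (G.adjMatrix ℝ).IsHermitian)
    (B : ℕ → Matrix (Fin n) (Fin n) ℝ)
    (hB0 : B 0 = 1) (hB1 : B 1 = G.adjMatrix ℝ)
    (hB2 : B 2 = (G.adjMatrix ℝ) ^ 2 - (q + 1 : ℝ) • 1)
    (hBrec : ∀ m, 3 ≤ m → B m = B (m - 1) * G.adjMatrix ℝ - (q : ℝ) • B (m - 2))
    (N : ℕ → ℕ)
    (hN : ∀ m, (N m : ℝ) =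
      (B m - (q - 1 : ℝ) • ∑ k ∈ Finset.Icc 1 ((m - 1) / 2), B (m - 2 * k)).trace) :
    ∀ m : ℕ, 1 ≤ m → (N m : ℝ) =
      2 * (Real.sqrt q) ^ m *
        ∑ i : Fin n, (Chebyshev.T ℝ (m : ℤ)).eval (hHerm.eigenvalues i / (2 * Real.sqrt q))
      + n * (if Even m then (1 : ℝ) else 0) * (q - 1) :=
  card_reducedCycles_eq_chebyshevT_sum_general G q hq hHerm B hB0 hB1 hB2 hBrec N hN
end

section
/- Let A be a real symmetric n×n matrix with spectral decomposition A = ∑_{λ∈σ(A)} λ P_λ, where P_λ are the orthogonal spectral projections. Fix q > 0 and define a_m = ∑_{λ∈σ(A), |λ|<2√q} T_m(λ/(2√q))·P_λ. Then every entry of a_m lies in the interval [−1, 1]. -/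
open Polynomial Polynomial.Chebyshev Matrix Finset

/-- Let `A` be a real symmetric `n × n` matrix with spectral decomposition
`A = ∑_{λ ∈ σ} λ • P λ`, where the `P λ` are the orthogonal spectral projections
(symmetric, idempotent, mutually orthogonal, summing to the identity). Fix `q > 0`
and set `a m = ∑_{λ ∈ σ, |λ| < 2√q} T_m(λ/(2√q)) • P λ`. Then for every `m ≥ 1`
every entry of `a m` lies in `[-1, 1]`. -/
theorem abs_entry_principalPart_le_one
    {n : ℕ} (A : Matrix (Fin n) (Fin n) ℝ) (hA : A.IsSymm)
    (σ : Finset ℝ) (P : ℝ → Matrix (Fin n) (Fin n) ℝ)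
    (hdecomp : A = ∑ lam ∈ σ, lam • P lam)
    (hsum : ∑ lam ∈ σ, P lam = 1)
    (hsym : ∀ lam ∈ σ, (P lam).IsSymm)
    (hidem : ∀ lam ∈ σ, P lam * P lam = P lam)
    (horth : ∀ lam ∈ σ, ∀ mu ∈ σ, lam ≠ mu → P lam * P mu = 0)
    (q : ℝ) (hq : 0 < q)
    (a : ℕ → Matrix (Fin n) (Fin n) ℝ)
    (ha : ∀ m, a m = ∑ lam ∈ σ.filter (fun lam => |lam| < 2 * Real.sqrt q),
        (Chebyshev.T ℝ (m : ℤ)).eval (lam / (2 * Real.sqrt q)) • P lam) :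
    ∀ m : ℕ, 1 ≤ m → ∀ i j : Fin n, -1 ≤ a m i j ∧ a m i j ≤ 1 := by
  intro m hm i j
  have hq2 : 0 < 2 * Real.sqrt q := by positivity
  -- rows of projections: P λ i j = ∑ k, P λ i k * P λ j k
  have hrow : ∀ lam ∈ σ, ∀ x y : Fin n,
      P lam x y = ∑ k, P lam x k * P lam y k := by
    intro lam hl x y
    conv_lhs => rw [← hidem lam hl]
    rw [Matrix.mul_apply]
    refine Finset.sum_congr rfl fun k _ => ?_
    congr 1
    conv_lhs => rw [← hsym lam hl]
    rfl
  -- diagonal entries are nonneg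
  have hdiag : ∀ lam ∈ σ, ∀ x : Fin n, 0 ≤ P lam x x := by
    intro lam hl x
    rw [hrow lam hl x x]
    exact Finset.sum_nonneg fun k _ => mul_self_nonneg _
  -- entry bound via Cauchy-Schwarz over rows
  have hentry : ∀ lam ∈ σ,
      |P lam i j| ≤ Real.sqrt (P lam i i) * Real.sqrt (P lam j j) := by
    intro lam hl
    have hcs := Finset.sum_mul_sq_le_sq_mul_sq Finset.univ
      (fun k => P lam i k) (fun k => P lam j k)
    have h1 : (P lam i j) ^ 2 ≤ P lam i i * P lam j j := by
      rw [hrow lam hl i j, hrow lam hl i i, hrow lam hl j j]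
      simpa [pow_two] using hcs
    have := Real.sqrt_le_sqrt h1
    rwa [Real.sqrt_sq_eq_abs,
      Real.sqrt_mul (hdiag lam hl i)] at this
  -- Chebyshev coefficient bound
  have hcoef : ∀ lam ∈ σ.filter (fun lam => |lam| < 2 * Real.sqrt q),
      |(Chebyshev.T ℝ (m : ℤ)).eval (lam / (2 * Real.sqrt q))| ≤ 1 := by
    intro lam hl
    rw [Finset.mem_filter] at hl
    set x := lam / (2 * Real.sqrt q) with hx
    have hx1 : |x| ≤ 1 := by
      rw [hx, abs_div, abs_of_pos hq2]
      exact (div_le_one hq2).2 (le_of_lt hl.2)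
    rw [abs_le] at hx1
    have : x = Real.cos (Real.arccos x) := (Real.cos_arccos hx1.1 hx1.2).symm
    rw [this, Polynomial.Chebyshev.T_real_cos]
    exact Real.abs_cos_le_one _
  -- trace-type identity: ∑ over σ of diagonal is 1
  have hdsum : ∀ x : Fin n, ∑ lam ∈ σ, P lam x x = 1 := by
    intro x
    have := congrArg (fun M : Matrix (Fin n) (Fin n) ℝ => M x x) hsum
    simpa [Matrix.sum_apply] using this
  -- main bound on |a m i j|
  have key : |a m i j| ≤ 1 := by
    rw [ha m, Matrix.sum_apply]
    calc |∑ lam ∈ σ.filter (fun lam => |lam| < 2 * Real.sqrt q),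
            ((Chebyshev.T ℝ (m : ℤ)).eval (lam / (2 * Real.sqrt q)) • P lam) i j|
        ≤ ∑ lam ∈ σ.filter (fun lam => |lam| < 2 * Real.sqrt q),
            |((Chebyshev.T ℝ (m : ℤ)).eval (lam / (2 * Real.sqrt q)) • P lam) i j| :=
          Finset.abs_sum_le_sum_abs _ _
      _ ≤ ∑ lam ∈ σ.filter (fun lam => |lam| < 2 * Real.sqrt q),
            Real.sqrt (P lam i i) * Real.sqrt (P lam j j) := by
          refine Finset.sum_le_sum fun lam hl => ?_
          have hlσ : lam ∈ σ := (Finset.mem_filter.1 hl).1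
          rw [Matrix.smul_apply, smul_eq_mul, abs_mul]
          calc |(Chebyshev.T ℝ (m : ℤ)).eval (lam / (2 * Real.sqrt q))| * |P lam i j|
              ≤ 1 * |P lam i j| := by
                exact mul_le_mul_of_nonneg_right (hcoef lam hl) (abs_nonneg _)
            _ = |P lam i j| := one_mul _
            _ ≤ _ := hentry lam hlσ
      _ ≤ ∑ lam ∈ σ, Real.sqrt (P lam i i) * Real.sqrt (P lam j j) :=
          Finset.sum_le_sum_of_subset_of_nonneg (Finset.filter_subset _ _)
            (fun lam _ _ => mul_nonneg (Real.sqrt_nonneg _) (Real.sqrt_nonneg _))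
      _ ≤ 1 := by
          have hcs := Finset.sum_sq_le_sum_mul_sum_of_sq_eq_mul σ
            (r := fun lam => Real.sqrt (P lam i i) * Real.sqrt (P lam j j))
            (f := fun lam => P lam i i) (g := fun lam => P lam j j)
            (fun lam hl => hdiag lam hl i) (fun lam hl => hdiag lam hl j)
            (fun lam hl => by
              rw [mul_pow, Real.sq_sqrt (hdiag lam hl i), Real.sq_sqrt (hdiag lam hl j)])
          rw [hdsum i, hdsum j, mul_one] at hcs
          have hnn : 0 ≤ ∑ lam ∈ σ, Real.sqrt (P lam i i) * Real.sqrt (P lam j j) :=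
            Finset.sum_nonneg fun lam _ => mul_nonneg (Real.sqrt_nonneg _) (Real.sqrt_nonneg _)
          nlinarith
  exact abs_le.1 key
end

section
/- Let A be a real symmetric matrix, q > 0, and for each eigenvalue λ with |λ| < 2√q set θ_λ = arccos(λ/(2√q)) ∈ (0,π). Define s_m = ∑_{|λ|<2√q} (sin((m+1)θ_λ)/sin θ_λ)·P_λ. Fix a positive integer k and assume (k−2j)θ_λ ∉ 2πℤ for all such λ and all 0 ≤ j ≤ ⌊(k−1)/2⌋. Then ‖ (1/N)∑_{m=1}^{N} s_mᵏ − e_k·2^{−k}·C(k,k/2)·∑_{|λ|<2√q} (sin θ_λ)^{−k}·P_λ ‖ = O(1/N) as N → ∞. -/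
open Finset Real Matrix

/-!
Expanding `sin^k x = (2i)⁻ᵏ ∑ⱼ (-1)ʲ C(k,j) e^{i(k-2j)x}`, the sum of `sin^k((m+1)θ)` over
`1 ≤ m ≤ N` is `N` times the constant term `e_k 2⁻ᵏ C(k,k/2)` plus geometric sums in the
frequencies `e^{i(k-2j)θ}`, `2j ≠ k`; non-resonance says none of these is `1`, so the geometric
sums stay bounded. As the `P λ` are orthogonal idempotents,
`s_m^k = ∑_λ (sin((m+1)θ_λ)/sin θ_λ)^k P_λ`, and the matrix estimate follows from the scalar one
for each `λ`.
-/

lemma norm_geom_sum_Ico_le {K : Type*} [NormedField K] {w : K} (hw : ‖w‖ ≤ 1) (hw1 : w ≠ 1)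
    (a b : ℕ) : ‖∑ i ∈ Ico a b, w ^ i‖ ≤ 2 / ‖w - 1‖ := by
  have hpos : 0 ≤ 2 / ‖w - 1‖ := by positivity
  rcases le_or_gt a b with hab | hba
  · rw [geom_sum_Ico hw1 hab, norm_div]
    gcongr
    calc ‖w ^ b - w ^ a‖ ≤ ‖w ^ b‖ + ‖w ^ a‖ := norm_sub_le _ _
      _ ≤ 1 + 1 := by
        rw [norm_pow, norm_pow]
        gcongr <;> exact pow_le_one₀ (norm_nonneg w) hw
      _ = 2 := by norm_num
  · simpa [Ico_eq_empty_of_le hba.le] using hpos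

lemma norm_sum_Ico_sum_pow_sub_le {K ι : Type*} [NormedField K] [DecidableEq K] (s : Finset ι)
    (c w : ι → K) (hw : ∀ j ∈ s, ‖w j‖ ≤ 1) (a b : ℕ) :
    ‖∑ m ∈ Ico a b, ∑ j ∈ s, c j * w j ^ m - ((b - a : ℕ) : K) * ∑ j ∈ s with w j = 1, c j‖
      ≤ ∑ j ∈ s with w j ≠ 1, ‖c j‖ * (2 / ‖w j - 1‖) := by
  have hresonant : ∑ j ∈ s with w j = 1, c j * ∑ m ∈ Ico a b, w j ^ m
      = ((b - a : ℕ) : K) * ∑ j ∈ s with w j = 1, c j := by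
    rw [mul_sum]
    refine sum_congr rfl fun j hj => ?_
    simp [(mem_filter.mp hj).2, mul_comm]
  have hsplit : ∑ m ∈ Ico a b, ∑ j ∈ s, c j * w j ^ m
      - ((b - a : ℕ) : K) * ∑ j ∈ s with w j = 1, c j
      = ∑ j ∈ s with w j ≠ 1, c j * ∑ m ∈ Ico a b, w j ^ m := by
    rw [sum_comm]
    simp only [← mul_sum]
    rw [← sum_filter_add_sum_filter_not s (fun j => w j = 1), hresonant, add_sub_cancel_left]
  rw [hsplit]
  refine (norm_sum_le _ _).trans (sum_le_sum fun j hj => ?_)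
  obtain ⟨hjs, hj1⟩ := mem_filter.mp hj
  rw [norm_mul]
  gcongr
  exact norm_geom_sum_Ico_le (hw j hjs) hj1 a b

open Complex in
lemma Complex.sin_pow_eq_sum_exp (z : ℂ) (k : ℕ) :
    sin z ^ k = ∑ j ∈ range (k + 1),
      (2 * I)⁻¹ ^ k * ((-1) ^ j * k.choose j) * cexp ((k - 2 * j) * z * I) := by
  have hsin : sin z = (2 * I)⁻¹ * (-cexp (-z * I) + cexp (z * I)) := by
    rw [Complex.sin, mul_inv, inv_I]
    ring
  rw [hsin, mul_pow, add_pow, mul_sum]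
  refine sum_congr rfl fun j hj => ?_
  have hjk : j ≤ k := mem_range_succ_iff.mp hj
  have hexp : cexp (-z * I) ^ j * cexp (z * I) ^ (k - j) = cexp ((k - 2 * j) * z * I) := by
    rw [← Complex.exp_nat_mul, ← Complex.exp_nat_mul, ← Complex.exp_add]
    congr 1
    push_cast [Nat.cast_sub hjk]
    ring
  rw [neg_pow, ← hexp]
  ring

/-- The mean `(2π)⁻¹ ∫₀^{2π} sin^k` of `sin^k` over a period. -/
noncomputable def sinPowMean (k : ℕ) : ℝ :=
  (if Even k then 1 else 0) * (1 / 2 ^ k) * k.choose (k / 2)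

open Complex in
lemma sum_filter_two_mul_eq_sinPowMean (k : ℕ) :
    ∑ j ∈ range (k + 1) with 2 * j = k, (2 * I)⁻¹ ^ k * ((-1) ^ j * k.choose j)
      = (sinPowMean k : ℂ) := by
  rcases Nat.even_or_odd k with ⟨t, rfl⟩ | hodd
  · have hfilter : (range (t + t + 1)).filter (fun j => 2 * j = t + t) = {t} := by
      ext j
      simp only [mem_filter, mem_range, mem_singleton]
      omega
    have hI : (2 * I)⁻¹ ^ (t + t) * (-1) ^ t = (1 / 2 ^ (t + t) : ℂ) := by
      have h4 : ((2 * I) ^ 2)⁻¹ * (-1) = (1 / 2 ^ 2 : ℂ) := by rw [mul_pow, I_sq]; norm_num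
      rw [← two_mul, pow_mul, pow_mul, inv_pow, ← mul_pow, h4, _root_.one_div_pow]
    have hev : Even (t + t) := ⟨t, rfl⟩
    simp only [hfilter, sum_singleton, sinPowMean, hev, if_true,
      show (t + t) / 2 = t by omega]
    push_cast
    rw [← hI]
    ring
  · have hfilter : (range (k + 1)).filter (fun j => 2 * j = k) = ∅ := by
      ext j
      simp only [mem_filter, mem_range, notMem_empty, iff_false, not_and]
      exact fun _ h => Nat.not_even_iff_odd.mpr hodd ⟨j, by omega⟩
    simp [hfilter, sinPowMean, Nat.not_even_iff_odd.mpr hodd]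

def IsNonresonant (k : ℕ) (θ : ℝ) : Prop :=
  ∀ j : ℕ, j ≤ (k - 1) / 2 → ∀ l : ℤ, ((k : ℝ) - 2 * j) * θ ≠ 2 * π * l

open Complex in
lemma cexp_mul_I_eq_one_iff_of_nonresonant {θ : ℝ} {k : ℕ} (hres : IsNonresonant k θ) {j : ℕ}
    (hjk : j ≤ k) : cexp ((k - 2 * j) * θ * I) = 1 ↔ 2 * j = k := by
  refine ⟨fun h => ?_, fun h => ?_⟩
  · obtain ⟨l, hl⟩ := Complex.exp_eq_one_iff.mp h
    have hreal : ((k : ℝ) - 2 * j) * θ = 2 * π * l := by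
      have hl' : ((k : ℂ) - 2 * j) * θ * I = 2 * π * l * I := hl.trans (by ring)
      exact_mod_cast mul_right_cancel₀ I_ne_zero hl'
    by_contra hne
    rcases Nat.lt_or_gt_of_ne hne with hlt | hgt
    · exact hres j (by omega) l hreal
    · -- the frequencies `k - 2j` and `2j - k` are opposite
      refine hres (k - j) (by omega) (-l) ?_
      push_cast [Nat.cast_sub hjk]
      linarith
  · have : (k : ℂ) - 2 * j = 0 := by rw [← h]; push_cast; ring
    simp [this]

open Complex in
lemma exists_abs_sum_sin_pow_sub_le {θ : ℝ} {k : ℕ} (hres : IsNonresonant k θ) :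
    ∃ B, ∀ N : ℕ, |∑ m ∈ Icc 1 N, Real.sin ((m + 1) * θ) ^ k - N * sinPowMean k| ≤ B := by
  set c : ℕ → ℂ := fun j => (2 * I)⁻¹ ^ k * ((-1) ^ j * k.choose j)
  set w : ℕ → ℂ := fun j => cexp ((k - 2 * j) * θ * I)
  have hw : ∀ j ∈ range (k + 1), ‖w j‖ ≤ 1 := fun j _ => by
    rw [show w j = cexp (((k - 2 * j) * θ : ℝ) * I) by push_cast; rfl, norm_exp_ofReal_mul_I]
  have hresonant : (range (k + 1)).filter (fun j => w j = 1)
      = (range (k + 1)).filter (fun j => 2 * j = k) :=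
    filter_congr fun j hj =>
      cexp_mul_I_eq_one_iff_of_nonresonant hres (mem_range_succ_iff.mp hj)
  have hsum : ∀ N : ℕ, ((∑ m ∈ Icc 1 N, Real.sin ((m + 1) * θ) ^ k : ℝ) : ℂ)
      = ∑ m ∈ Ico 2 (N + 2), ∑ j ∈ range (k + 1), c j * w j ^ m := by
    intro N
    rw [← Ico_add_one_right_eq_Icc, ← sum_Ico_add' _ 1 (N + 1) 1]
    push_cast
    refine sum_congr rfl fun m _ => ?_
    rw [sin_pow_eq_sum_exp]
    refine sum_congr rfl fun j _ => ?_
    rw [← Complex.exp_nat_mul]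
    congr 2
    push_cast
    ring
  refine ⟨∑ j ∈ range (k + 1) with w j ≠ 1, ‖c j‖ * (2 / ‖w j - 1‖), fun N => ?_⟩
  have key := norm_sum_Ico_sum_pow_sub_le (range (k + 1)) c w hw 2 (N + 2)
  rw [hresonant, sum_filter_two_mul_eq_sinPowMean, ← hsum, Nat.add_sub_cancel] at key
  rwa [← Real.norm_eq_abs, ← Complex.norm_real, ofReal_sub, ofReal_mul, ofReal_natCast]

lemma exists_abs_average_sin_div_pow_sub_le {θ : ℝ} {k : ℕ} (hres : IsNonresonant k θ) :
    ∃ B, ∀ N : ℕ, 1 ≤ N →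
      |1 / (N : ℝ) * ∑ m ∈ Icc 1 N, (sin ((m + 1) * θ) / sin θ) ^ k
        - sinPowMean k * (sin θ)⁻¹ ^ k| ≤ B / N := by
  obtain ⟨B, hB⟩ := exists_abs_sum_sin_pow_sub_le hres
  refine ⟨B * |(sin θ)⁻¹ ^ k|, fun N hN => ?_⟩
  have hNpos : (0 : ℝ) < N := by exact_mod_cast hN
  have hfactor : 1 / (N : ℝ) * ∑ m ∈ Icc 1 N, (sin ((m + 1) * θ) / sin θ) ^ k
        - sinPowMean k * (sin θ)⁻¹ ^ k
      = (∑ m ∈ Icc 1 N, sin ((m + 1) * θ) ^ k - N * sinPowMean k) * (sin θ)⁻¹ ^ k / N := by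
    have hsum : ∑ m ∈ Icc 1 N, (sin ((m + 1) * θ) / sin θ) ^ k
        = (∑ m ∈ Icc 1 N, sin ((m + 1) * θ) ^ k) * (sin θ)⁻¹ ^ k := by
      simp only [sum_mul, div_eq_mul_inv, mul_pow, inv_pow]
    rw [hsum]
    generalize ∑ m ∈ Icc 1 N, sin ((m + 1) * θ) ^ k = S
    field_simp
  rw [hfactor, abs_div, abs_mul, abs_of_pos hNpos]
  gcongr
  exact hB N

lemma sum_smul_pow_of_orthogonal {ι R A : Type*} [CommSemiring R] [Semiring A] [Algebra R A]
    {s : Finset ι} {P : ι → A} (hidem : ∀ i ∈ s, P i * P i = P i)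
    (horth : ∀ i ∈ s, ∀ j ∈ s, i ≠ j → P i * P j = 0) (c : ι → R) {k : ℕ} (hk : 0 < k) :
    (∑ i ∈ s, c i • P i) ^ k = ∑ i ∈ s, c i ^ k • P i := by
  induction k, hk using Nat.le_induction with
  | base => simp
  | succ k _ ih =>
    rw [pow_succ, ih, sum_mul_sum]
    refine sum_congr rfl fun i hi => ?_
    rw [sum_eq_single i]
    · rw [smul_mul_smul_comm, hidem i hi, pow_succ]
    · intro j hj hji
      rw [smul_mul_smul_comm, horth i hi j hj hji.symm, smul_zero]
    · exact fun h => absurd hi h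

lemma exists_abs_sum_smul_apply_le {ι m n : Type*} [Fintype m] [Fintype n] (t : Finset ι)
    (P : ι → Matrix m n ℝ) (d : ℕ → ι → ℝ) (hd : ∀ l ∈ t, ∃ B, ∀ N : ℕ, 1 ≤ N → |d N l| ≤ B / N) :
    ∃ C, ∀ N : ℕ, 1 ≤ N → ∀ i j, |(∑ l ∈ t, d N l • P l) i j| ≤ C / N := by
  choose! B hB using hd
  have hentry : ∀ l i j, |P l i j| ≤ ∑ p, ∑ r, |P l p r| := fun l i j =>
    (single_le_sum (fun r _ => abs_nonneg (P l i r)) (mem_univ j)).trans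
      (single_le_sum (f := fun p => ∑ r, |P l p r|)
        (fun p _ => sum_nonneg fun r _ => abs_nonneg _) (mem_univ i))
  refine ⟨∑ l ∈ t, B l * ∑ p, ∑ r, |P l p r|, fun N hN i j => ?_⟩
  rw [sum_div, Matrix.sum_apply]
  refine (abs_sum_le_sum_abs _ _).trans (sum_le_sum fun l hl => ?_)
  rw [Matrix.smul_apply, smul_eq_mul, abs_mul, mul_div_right_comm]
  exact mul_le_mul (hB l hl N hN) (hentry l i j) (abs_nonneg _)
    ((abs_nonneg _).trans (hB l hl N hN))

theorem average_s_pow_tendsto_general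
    {n : ℕ}
    (σ : Finset ℝ) (P : ℝ → Matrix (Fin n) (Fin n) ℝ)
    (hidem : ∀ lam ∈ σ, P lam * P lam = P lam)
    (horth : ∀ lam ∈ σ, ∀ mu ∈ σ, lam ≠ mu → P lam * P mu = 0)
    (q : ℝ)
    (θ : ℝ → ℝ)
    (s : ℕ → Matrix (Fin n) (Fin n) ℝ)
    (hs : ∀ m, s m = ∑ lam ∈ σ.filter (fun lam => |lam| < 2 * Real.sqrt q),
        (Real.sin ((m + 1) * θ lam) / Real.sin (θ lam)) • P lam)
    (k : ℕ) (hk : 0 < k)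
    (hang : ∀ lam ∈ σ, |lam| < 2 * Real.sqrt q → ∀ j : ℕ, j ≤ (k - 1) / 2 →
      ∀ l : ℤ, ((k : ℝ) - 2 * j) * θ lam ≠ 2 * Real.pi * l) :
    ∃ C : ℝ, ∀ N : ℕ, 1 ≤ N → ∀ i j : Fin n,
      |((1 / (N : ℝ)) • ∑ m ∈ Finset.Icc 1 N, (s m) ^ k
        - ((if Even k then (1 : ℝ) else 0) * (1 / 2 ^ k) * (k.choose (k / 2))) •
            ∑ lam ∈ σ.filter (fun lam => |lam| < 2 * Real.sqrt q),
              (Real.sin (θ lam))⁻¹ ^ k • P lam) i j|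
      ≤ C / N := by
  set σ' := σ.filter (fun lam => |lam| < 2 * Real.sqrt q)
  have hpow : ∀ m, s m ^ k = ∑ lam ∈ σ', (sin ((m + 1) * θ lam) / sin (θ lam)) ^ k • P lam :=
    fun m => by
      rw [hs m]
      exact sum_smul_pow_of_orthogonal (fun l hl => hidem l (mem_filter.mp hl).1)
        (fun l hl l' hl' => horth l (mem_filter.mp hl).1 l' (mem_filter.mp hl').1) _ hk
  obtain ⟨C, hC⟩ := exists_abs_sum_smul_apply_le σ' P
    (fun N lam => 1 / (N : ℝ) * ∑ m ∈ Icc 1 N, (sin ((m + 1) * θ lam) / sin (θ lam)) ^ k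
      - sinPowMean k * (sin (θ lam))⁻¹ ^ k)
    (fun lam hlam => exists_abs_average_sin_div_pow_sub_le
      (hang lam (mem_filter.mp hlam).1 (mem_filter.mp hlam).2))
  refine ⟨C, fun N hN i j => ?_⟩
  convert hC N hN i j using 4
  simp only [hpow, sub_smul, mul_smul, sum_sub_distrib, smul_sum, sum_smul, sinPowMean]
  rw [sum_comm]

/-- Limit theorem for `s m = ∑_{|λ|<2√q} (sin((m+1)θ_λ)/sin θ_λ) • P λ`: under the
non-resonance condition `(k-2j) θ_λ ∉ 2πℤ`, the averages `(1/N) ∑_{m=1}^N (s m)^k`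
converge to `e_k 2⁻ᵏ C(k,k/2) ∑_{|λ|<2√q} (sin θ_λ)⁻ᵏ • P λ` with error `O(1/N)`
(stated entrywise). -/
theorem average_s_pow_tendsto
    {n : ℕ} (A : Matrix (Fin n) (Fin n) ℝ) (hA : A.IsSymm)
    (σ : Finset ℝ) (P : ℝ → Matrix (Fin n) (Fin n) ℝ)
    (hdecomp : A = ∑ lam ∈ σ, lam • P lam)
    (hsum : ∑ lam ∈ σ, P lam = 1)
    (hsym : ∀ lam ∈ σ, (P lam).IsSymm)
    (hidem : ∀ lam ∈ σ, P lam * P lam = P lam)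
    (horth : ∀ lam ∈ σ, ∀ mu ∈ σ, lam ≠ mu → P lam * P mu = 0)
    (q : ℝ) (hq : 0 < q)
    (θ : ℝ → ℝ) (hθdef : ∀ lam, θ lam = Real.arccos (lam / (2 * Real.sqrt q)))
    (s : ℕ → Matrix (Fin n) (Fin n) ℝ)
    (hs : ∀ m, s m = ∑ lam ∈ σ.filter (fun lam => |lam| < 2 * Real.sqrt q),
        (Real.sin ((m + 1) * θ lam) / Real.sin (θ lam)) • P lam)
    (k : ℕ) (hk : 0 < k)
    (hang : ∀ lam ∈ σ, |lam| < 2 * Real.sqrt q → ∀ j : ℕ, j ≤ (k - 1) / 2 →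
      ∀ l : ℤ, ((k : ℝ) - 2 * j) * θ lam ≠ 2 * Real.pi * l) :
    ∃ C : ℝ, ∀ N : ℕ, 1 ≤ N → ∀ i j : Fin n,
      |((1 / (N : ℝ)) • ∑ m ∈ Finset.Icc 1 N, (s m) ^ k
        - ((if Even k then (1 : ℝ) else 0) * (1 / 2 ^ k) * (k.choose (k / 2))) •
            ∑ lam ∈ σ.filter (fun lam => |lam| < 2 * Real.sqrt q),
              (Real.sin (θ lam))⁻¹ ^ k • P lam) i j|
      ≤ C / N :=
  average_s_pow_tendsto_general σ P hidem horth q θ s hs k hk hang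
end
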